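/- arXiv:1506.01068 — 2 statements merged into one kernel-verified Lean document; each statement's English description precedes it below -/
import Mathlib

section
/- Let (f_η)_{η<λ} be a decreasing transfinite sequence of non-negative bounded functions, and θ ≤ λ even. Then for every even ζ with θ ≤ ζ ≤ λ, 0 ≤ Σ*_{η<ζ} (−1)^η f_η − Σ*_{η<θ} (−1)^η f_η ≤ f_θ − f_ζ pointwise. -/
/-! Along even ordinals the partial sums `Σ*_{η<θ}` increase while `Σ*_{η<θ} + f_θ` decrease.
A step `θ ↦ θ + 2` adds `f_θ - f_{θ+1}`, which lies between `0` and `f_θ - f_{θ+2}` by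
monotonicity; at a limit `ζ` the sum is a supremum over even `ξ < ζ`, and each `Σ*_{η<ξ}` is
squeezed by the two invariants between `Σ*_{η<θ}` and `Σ*_{η<θ} + f_θ - f_ζ`. -/


open Set Filter Topology

noncomputable section

/-- Oscillation of `f` at `x` restricted to `F`. -/
def osc {X : Type*} [TopologicalSpace X] (f : X → ℝ) (x : X) (F : Set X) : ENNReal :=
  ⨅ (U : Set X) (_ : IsOpen U) (_ : x ∈ U),
    ⨆ (y) (_ : y ∈ U ∩ F) (z) (_ : z ∈ U ∩ F), ENNReal.ofReal |f y - f z|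

/-- Oscillation derivative. -/
def oscDeriv {X : Type*} [TopologicalSpace X] (f : X → ℝ) (ε : ℝ) (F : Set X) : Set X :=
  {x ∈ F | ENNReal.ofReal ε ≤ osc f x F}

/-- Iterated derivatives of a set operation. -/
def iterD {X : Type*} (D : Set X → Set X) (F : Set X) (o : Ordinal.{0}) : Set X :=
  Ordinal.limitRecOn o F (fun _ ih => D ih) (fun o _ ih => ⋂ (η : Ordinal.{0}) (h : η < o), ih η h)

open Classical in
/-- Rank of a derivative: least `θ` with `D^θ(X) = ∅`, or `ω₁` if there is none. -/
def rkD {X : Type*} (D : Set X → Set X) : Ordinal.{0} :=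
  if ∃ θ, iterD D Set.univ θ = ∅ then sInf {θ | iterD D Set.univ θ = ∅}
  else (Cardinal.aleph 1).ord

/-- Oscillation rank. -/
def betaRank {X : Type*} [TopologicalSpace X] (f : X → ℝ) : Ordinal.{0} :=
  ⨆ ε : {ε : ℝ // 0 < ε}, rkD (oscDeriv f ε.1)

/-- Oscillation of a sequence of functions. -/
def oscSeq {X : Type*} [TopologicalSpace X] (f : ℕ → X → ℝ) (x : X) (F : Set X) : ENNReal :=
  ⨅ (U : Set X) (_ : IsOpen U) (_ : x ∈ U) (N : ℕ),
    ⨆ (m) (_ : N ≤ m) (n) (_ : N ≤ n) (y) (_ : y ∈ U ∩ F), ENNReal.ofReal |f m y - f n y|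

def oscSeqDeriv {X : Type*} [TopologicalSpace X] (f : ℕ → X → ℝ) (ε : ℝ) (F : Set X) : Set X :=
  {x ∈ F | ENNReal.ofReal ε ≤ oscSeq f x F}

/-- Convergence rank of a sequence. -/
def gammaRank {X : Type*} [TopologicalSpace X] (f : ℕ → X → ℝ) : Ordinal.{0} :=
  ⨆ ε : {ε : ℝ // 0 < ε}, rkD (oscSeqDeriv f ε.1)

/-- Alternating transfinite sum `Σ*_{η<θ} (−1)^η f_η`. -/
def altSum {X : Type*} (f : Ordinal.{0} → X → ℝ) (θ : Ordinal.{0}) : X → ℝ :=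
  Ordinal.limitRecOn θ (fun _ => 0)
    (fun η ih x => ih x + (if η % 2 = 0 then f η x else - f η x))
    (fun θ _ ih x => sSup {y | ∃ ζ, ∃ h : ζ < θ, ζ % 2 = 0 ∧ ih ζ h x = y})

/-- The `ξ`-th additive Borel class. -/
def Sigma0 {X : Type*} [TopologicalSpace X] (ξ : Ordinal.{0}) : Set (Set X) :=
  {s | IsOpen s} ∪
  {s | ∃ g : ℕ → Set X,
        (∀ n, ∃ η, ∃ _ : η < ξ, 1 ≤ η ∧ (g n)ᶜ ∈ Sigma0 η) ∧ s = ⋃ n, g n}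
termination_by ξ

/-- Baire class `ξ` functions. -/
def BaireClass {X : Type*} [TopologicalSpace X] (ξ : Ordinal.{0}) (f : X → ℝ) : Prop :=
  (ξ = 0 ∧ Continuous f) ∨
  (1 ≤ ξ ∧ ∃ g : ℕ → X → ℝ,
      (∀ n, ∃ η, ∃ _ : η < ξ, BaireClass η (g n)) ∧
      ∀ x, Tendsto (fun n => g n x) atTop (𝓝 (f x)))
termination_by ξ

namespace Ordinal

theorem mod_two_eq_zero_or_one (o : Ordinal) : o % 2 = 0 ∨ o % 2 = 1 := by
  have hlt : o % 2 < 1 + 1 := by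
    simpa [one_add_one_eq_two] using Ordinal.mod_lt o (two_ne_zero : (2 : Ordinal) ≠ 0)
  exact Order.le_one_iff.mp (Order.lt_add_one_iff.mp hlt)

theorem add_one_mod_two_of_mod_two_eq_zero {o : Ordinal} (h : o % 2 = 0) :
    (o + 1) % 2 = 1 := by
  have ho : o = 2 * (o / 2) := by simpa [h] using (Ordinal.div_add_mod o 2).symm
  rw [ho, Ordinal.mul_add_mod_self, Ordinal.mod_eq_of_lt one_lt_two]

theorem mod_two_eq_one_of_add_one_mod_two_eq_zero {o : Ordinal} (h : (o + 1) % 2 = 0) :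
    o % 2 = 1 :=
  (mod_two_eq_zero_or_one o).resolve_left fun h0 => by
    simp [add_one_mod_two_of_mod_two_eq_zero h0] at h

theorem exists_eq_add_one_of_mod_two_eq_one {o : Ordinal} (h : o % 2 = 1) :
    ∃ μ, o = μ + 1 ∧ μ % 2 = 0 :=
  ⟨2 * (o / 2), by rw [← h, Ordinal.div_add_mod], by simp⟩

end Ordinal

section altSum

variable {X : Type*} (f : Ordinal.{0} → X → ℝ) (x : X)

theorem altSum_add_one (η : Ordinal.{0}) :
    altSum f (η + 1) x = altSum f η x + if η % 2 = 0 then f η x else -f η x := by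
  simp [altSum]

theorem altSum_of_isSuccLimit {θ : Ordinal.{0}} (h : Order.IsSuccLimit θ) :
    altSum f θ x = sSup {y | ∃ ζ, ∃ _ : ζ < θ, ζ % 2 = 0 ∧ altSum f ζ x = y} := by
  simp [altSum, Ordinal.limitRecOn_limit _ _ _ _ h]

theorem altSum_add_two {μ : Ordinal.{0}} (hμ : μ % 2 = 0) :
    altSum f (μ + 1 + 1) x = altSum f μ x + (f μ x - f (μ + 1) x) := by
  rw [altSum_add_one, altSum_add_one, if_pos hμ,
    if_neg (by simp [Ordinal.add_one_mod_two_of_mod_two_eq_zero hμ])]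
  ring

theorem altSum_le_and_add_le {ζ : Ordinal.{0}} (hf : AntitoneOn (fun η => f η x) (Iic ζ))
    (hζ : ζ % 2 = 0) {θ : Ordinal.{0}} (hθ : θ % 2 = 0) (hθζ : θ ≤ ζ) :
    altSum f θ x ≤ altSum f ζ x ∧ altSum f ζ x + f ζ x ≤ altSum f θ x + f θ x := by
  induction ζ using WellFoundedLT.induction generalizing θ with
  | _ ζ IH =>
  have ih : ∀ ξ < ζ, ξ % 2 = 0 → ∀ θ, θ % 2 = 0 → θ ≤ ξ →
      altSum f θ x ≤ altSum f ξ x ∧ altSum f ξ x + f ξ x ≤ altSum f θ x + f θ x :=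
    fun ξ hξ hξ2 _ => IH ξ hξ (hf.mono (Iic_subset_Iic.mpr hξ.le)) hξ2
  have anti : ∀ {a b}, a ≤ b → b ≤ ζ → f b x ≤ f a x :=
    fun hab hb => hf (hab.trans hb) hb hab
  rcases hθζ.eq_or_lt with rfl | hlt
  · simp
  rcases Ordinal.zero_or_succ_or_isSuccLimit ζ with rfl | ⟨ξ, rfl⟩ | hlim
  · simp at hlt
  · rw [Order.succ_eq_add_one] at *
    obtain ⟨μ, rfl, hμ⟩ := Ordinal.exists_eq_add_one_of_mod_two_eq_one
      (Ordinal.mod_two_eq_one_of_add_one_mod_two_eq_zero hζ)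
    have hθμ : θ ≤ μ := by
      rcases (Order.lt_add_one_iff.mp hlt).eq_or_lt with rfl | h
      · simp [Ordinal.add_one_mod_two_of_mod_two_eq_zero hμ] at hθ
      · exact Order.lt_add_one_iff.mp h
    have hμ₁ : μ < μ + 1 := Order.lt_add_one_iff.mpr le_rfl
    have hμ₂ : μ + 1 < μ + 1 + 1 := Order.lt_add_one_iff.mpr le_rfl
    have h₁ := anti hμ₂.le le_rfl
    have h₂ := anti hμ₁.le hμ₂.le
    have := ih μ (hμ₁.trans hμ₂) hμ θ hθ hθμ
    rw [altSum_add_two f x hμ]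
    constructor <;> linarith
  · rw [altSum_of_isSuccLimit f x hlim]
    set T := {y | ∃ ξ, ∃ _ : ξ < ζ, ξ % 2 = 0 ∧ altSum f ξ x = y}
    have hmem : altSum f θ x ∈ T := ⟨θ, hlt, hθ, rfl⟩
    have hub : ∀ y ∈ T, y ≤ altSum f θ x + f θ x - f ζ x := by
      rintro _ ⟨ξ, hξζ, hξ, rfl⟩
      rcases le_total θ ξ with hθξ | hξθ
      · have := (ih ξ hξζ hξ θ hθ hθξ).2
        linarith [anti hξζ.le le_rfl]
      · have := (ih θ hlt hθ ξ hξ hξθ).1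
        linarith [anti hθζ le_rfl]
    exact ⟨le_csSup ⟨_, hub⟩ hmem, le_sub_iff_add_le.mp (csSup_le ⟨_, hmem⟩ hub)⟩

end altSum

theorem stmt9_general {X : Type*} (lam : Ordinal.{0}) (f : Ordinal.{0} → X → ℝ)
    (hmono : ∀ η ζ : Ordinal.{0}, η ≤ ζ → ζ ≤ lam → ∀ x, f ζ x ≤ f η x)
    (θ ζ : Ordinal.{0}) (hθ : θ % 2 = 0) (hζ : ζ % 2 = 0)
    (hθζ : θ ≤ ζ) (hζl : ζ ≤ lam) (x : X) :
    0 ≤ altSum f ζ x - altSum f θ x ∧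
      altSum f ζ x - altSum f θ x ≤ f θ x - f ζ x := by
  have hf : AntitoneOn (fun η => f η x) (Iic ζ) :=
    fun a _ b hb hab => hmono a b hab (hb.trans hζl) x
  obtain ⟨h₁, h₂⟩ := altSum_le_and_add_le f x hf hζ hθ hθζ
  exact ⟨sub_nonneg.mpr h₁, by linarith⟩

theorem stmt9 {X : Type*} (lam : Ordinal.{0}) (f : Ordinal.{0} → X → ℝ)
    (hmono : ∀ η ζ : Ordinal.{0}, η ≤ ζ → ζ ≤ lam → ∀ x, f ζ x ≤ f η x)
    (hnn : ∀ η : Ordinal.{0}, η ≤ lam → ∀ x, 0 ≤ f η x)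
    (hbd : ∀ η : Ordinal.{0}, η ≤ lam → ∃ M, ∀ x, |f η x| ≤ M)
    (θ ζ : Ordinal.{0}) (hθ : θ % 2 = 0) (hζ : ζ % 2 = 0)
    (hθζ : θ ≤ ζ) (hζl : ζ ≤ lam) (x : X) :
    0 ≤ altSum f ζ x - altSum f θ x ∧
      altSum f ζ x - altSum f θ x ≤ f θ x - f ζ x :=
  stmt9_general lam f hmono θ ζ hθ hζ hθζ hζl x

end
end

section
/- Let f, g : X → ℝ be functions on a Polish space, U ⊆ X open, F ⊆ X closed and ε > 0 with |f(y) − g(y)| ≤ ε/4 for every y ∈ F ∩ U. Then for every countable ordinal η, D^η_{f,ε}(F) ∩ U ⊆ D^η_{g,ε/4}(F) ∩ U, where D^η denotes the η-th iterated oscillation derivative. -/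
open Set Filter Topology

noncomputable section

/-!
Transfinite induction on `η`. The only real step is the successor one: on `U` the derivative
`D_{f,ε}(S)` lies in `D_{g,ε/4}(T)` as soon as `S ∩ U ⊆ T`, because near a point of `U`,
oscillations of `f` on `S` exceed those of `g` on `T` by at most `2 · ε/4`.
-/

section iterD

variable {X : Type*} (D : Set X → Set X) (F : Set X)

lemma iterD_zero : iterD D F 0 = F :=
  Ordinal.limitRecOn_zero _ _ _

lemma iterD_add_one (o : Ordinal.{0}) : iterD D F (o + 1) = D (iterD D F o) :=
  Ordinal.limitRecOn_add_one _ _ _ _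

lemma iterD_limit {o : Ordinal.{0}} (ho : Order.IsSuccLimit o) :
    iterD D F o = ⋂ ζ < o, iterD D F ζ :=
  Ordinal.limitRecOn_limit _ _ _ _ ho

variable {D}

lemma iterD_subset (hD : ∀ s, D s ⊆ s) (o : Ordinal.{0}) : iterD D F o ⊆ F := by
  induction o using Ordinal.limitRecOn with
  | zero => rw [iterD_zero]
  | add_one o ih => rw [iterD_add_one]; exact (hD _).trans ih
  | limit o ho ih =>
    rw [iterD_limit D F ho]
    exact (iInter₂_subset 0 ho.bot_lt).trans (ih 0 ho.bot_lt)

lemma iterD_inter_subset_iterD {D₁ D₂ : Set X → Set X} (hD₁ : ∀ s, D₁ s ⊆ s) {U : Set X}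
    (hstep : ∀ S T, S ⊆ F → S ∩ U ⊆ T → D₁ S ∩ U ⊆ D₂ T) (o : Ordinal.{0}) :
    iterD D₁ F o ∩ U ⊆ iterD D₂ F o := by
  induction o using Ordinal.limitRecOn with
  | zero => rw [iterD_zero, iterD_zero]; exact inter_subset_left
  | add_one o ih =>
    rw [iterD_add_one, iterD_add_one]
    exact hstep _ _ (iterD_subset F hD₁ o) ih
  | limit o ho ih =>
    rw [iterD_limit _ _ ho, iterD_limit _ _ ho]
    rintro x ⟨hx, hxU⟩
    exact mem_iInter₂.2 fun ζ hζ => ih ζ hζ ⟨mem_iInter₂.1 hx ζ hζ, hxU⟩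

end iterD

lemma iSup_ofReal_abs_sub_le_add {X : Type*} {f g : X → ℝ} {A B : Set X} (hAB : A ⊆ B) {δ : ℝ}
    (hfg : ∀ y ∈ A, |f y - g y| ≤ δ) :
    ⨆ y ∈ A, ⨆ z ∈ A, ENNReal.ofReal |f y - f z| ≤
      (⨆ y ∈ B, ⨆ z ∈ B, ENNReal.ofReal |g y - g z|) + ENNReal.ofReal (2 * δ) := by
  refine iSup₂_le fun y hy => iSup₂_le fun z hz => ?_
  have hf : |f y - f z| ≤ |g y - g z| + 2 * δ := by
    have := hfg y hy
    have := hfg z hz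
    calc |f y - f z| = |(g y - g z) + (f y - g y) + (g z - f z)| := by congr 1; ring
      _ ≤ |g y - g z| + |f y - g y| + |g z - f z| := abs_add_three _ _ _
      _ ≤ |g y - g z| + 2 * δ := by rw [abs_sub_comm (g z)]; linarith
  calc ENNReal.ofReal |f y - f z| ≤ ENNReal.ofReal |g y - g z| + ENNReal.ofReal (2 * δ) :=
        (ENNReal.ofReal_le_ofReal hf).trans ENNReal.ofReal_add_le
    _ ≤ _ := by gcongr; exact le_iSup₂_of_le y (hAB hy) (le_iSup₂_of_le z (hAB hz) le_rfl)

section osc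

variable {X : Type*} [TopologicalSpace X]

lemma osc_le_iSup {f : X → ℝ} {x : X} {S V : Set X} (hV : IsOpen V) (hx : x ∈ V) :
    osc f x S ≤ ⨆ y ∈ V ∩ S, ⨆ z ∈ V ∩ S, ENNReal.ofReal |f y - f z| :=
  iInf₂_le_of_le V hV (iInf_le _ hx)

/-- Shrinking every neighbourhood of `x` into `U` is what lets the hypotheses live on `S ∩ U`
only. -/
lemma osc_le_osc_add {f g : X → ℝ} {x : X} {S T U : Set X} (hU : IsOpen U) (hx : x ∈ U)
    (hST : S ∩ U ⊆ T) {δ : ℝ} (hfg : ∀ y ∈ S ∩ U, |f y - g y| ≤ δ) :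
    osc f x S ≤ osc g x T + ENNReal.ofReal (2 * δ) := by
  rw [← tsub_le_iff_right]
  refine le_iInf fun V => le_iInf fun hV => le_iInf fun hxV => tsub_le_iff_right.2 ?_
  calc osc f x S
      ≤ ⨆ y ∈ (V ∩ U) ∩ S, ⨆ z ∈ (V ∩ U) ∩ S, ENNReal.ofReal |f y - f z| :=
        osc_le_iSup (V := V ∩ U) (hV.inter hU) ⟨hxV, hx⟩
    _ ≤ _ := iSup_ofReal_abs_sub_le_add (B := V ∩ T)
        (fun y hy => ⟨hy.1.1, hST ⟨hy.2, hy.1.2⟩⟩) (fun y hy => hfg y ⟨hy.2, hy.1.2⟩)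

lemma oscDeriv_subset (f : X → ℝ) (ε : ℝ) (S : Set X) : oscDeriv f ε S ⊆ S :=
  sep_subset _ _

lemma oscDeriv_anti (f : X → ℝ) {ε ε' : ℝ} (h : ε ≤ ε') (S : Set X) :
    oscDeriv f ε' S ⊆ oscDeriv f ε S :=
  fun _ hx => ⟨hx.1, (ENNReal.ofReal_le_ofReal h).trans hx.2⟩

lemma oscDeriv_inter_subset {f g : X → ℝ} {S T U : Set X} (hU : IsOpen U) (hST : S ∩ U ⊆ T)
    {ε δ : ℝ} (hδ : 0 ≤ δ) (hfg : ∀ y ∈ S ∩ U, |f y - g y| ≤ δ) :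
    oscDeriv f ε S ∩ U ⊆ oscDeriv g (ε - 2 * δ) T := by
  rintro x ⟨⟨hxS, hosc⟩, hxU⟩
  refine ⟨hST ⟨hxS, hxU⟩, ?_⟩
  rw [ENNReal.ofReal_sub _ (by positivity), tsub_le_iff_right]
  exact hosc.trans (osc_le_osc_add hU hxU hST hfg)

end osc

theorem stmt12_general {X : Type*} [TopologicalSpace X]
    (f g : X → ℝ) (U F : Set X) (hU : IsOpen U)
    (ε : ℝ) (hε : 0 < ε) (h : ∀ y ∈ F ∩ U, |f y - g y| ≤ ε / 4)
    (η : Ordinal.{0}) :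
    iterD (oscDeriv f ε) F η ∩ U ⊆ iterD (oscDeriv g (ε / 4)) F η ∩ U := by
  refine subset_inter ?_ inter_subset_right
  refine iterD_inter_subset_iterD F (oscDeriv_subset f ε) (fun S T hSF hST => ?_) η
  calc oscDeriv f ε S ∩ U
      ⊆ oscDeriv g (ε - 2 * (ε / 4)) T :=
        oscDeriv_inter_subset hU hST (by positivity)
          fun y hy => h y ⟨hSF hy.1, hy.2⟩
    _ ⊆ oscDeriv g (ε / 4) T := oscDeriv_anti g (by linarith) T

theorem stmt12 {X : Type*} [TopologicalSpace X] [PolishSpace X]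
    (f g : X → ℝ) (U F : Set X) (hU : IsOpen U) (hF : IsClosed F)
    (ε : ℝ) (hε : 0 < ε) (h : ∀ y ∈ F ∩ U, |f y - g y| ≤ ε / 4)
    (η : Ordinal.{0}) (hη : η.card ≤ Cardinal.aleph0) :
    iterD (oscDeriv f ε) F η ∩ U ⊆ iterD (oscDeriv g (ε / 4)) F η ∩ U :=
  stmt12_general f g U F hU ε hε h η

end
end
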